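/- arXiv:1606.02750 — 6 statements merged into one kernel-verified Lean document; each statement's English description precedes it below -/
import Mathlib

section
/- Let λ, μ be real numbers with λ ≥ 1 and μ > 1. Then for every z in the open unit disc 𝕌, the derivative of the normalized Wright function satisfies |𝒲'_{λ,μ}(z)| ≤ (μ+1)/(μ−1), where 𝒲'_{λ,μ}(z) = 1 + ∑_{m=1}^∞ (Γ(μ)(m+1)/(m! Γ(λm+μ))) z^m. -/
/-!
From `Γ(x + 1) = x Γ(x)` one gets `Γ(μ + m) ≥ μ^m Γ(μ)`, and `Γ(λm + μ) ≥ Γ(μ + m)` since `Γ`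
increases on `[2, ∞)`. Together with `m + 1 ≤ 2 m!` this bounds the `m`-th coefficient of
`𝒲'_{λ,μ}` by `2 μ⁻ᵐ`, the constant one being `1`. On the unit disc the series is therefore
dominated by `1 + ∑_{m ≥ 1} 2 μ⁻ᵐ = 1 + 2 / (μ - 1) = (μ + 1) / (μ - 1)`.
-/

/-- The derivative of the normalized Wright function:
`𝒲'_{λ,μ}(z) = 1 + ∑_{m=1}^∞ (Γ(μ)(m+1)/(m! Γ(λm+μ))) z^m`
(the `m = 0` term is `1`). -/
noncomputable def normWrightDeriv (lam mu : ℝ) (z : ℂ) : ℂ :=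
  ∑' m : ℕ,
    ((Real.Gamma mu * (m + 1) / (Nat.factorial m * Real.Gamma (lam * m + mu)) : ℝ) : ℂ) * z ^ m

open Real
open scoped Nat

theorem Nat.add_one_le_two_mul_factorial (m : ℕ) : m + 1 ≤ 2 * m ! := by
  rcases m.eq_zero_or_pos with rfl | hm
  · simp
  · have := m.self_le_factorial
    omega

namespace Real

theorem pow_mul_Gamma_le_Gamma_add_nat {x : ℝ} (hx : 0 < x) (m : ℕ) :
    x ^ m * Gamma x ≤ Gamma (x + m) := by
  induction m with
  | zero => simp
  | succ n ih =>
    have hxn : 0 < x + n := by positivity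
    calc x ^ (n + 1) * Gamma x = x * (x ^ n * Gamma x) := by ring
      _ ≤ (x + n) * Gamma (x + n) := by gcongr; linarith
      _ = Gamma (x + ↑(n + 1)) := by rw [Nat.cast_succ, ← add_assoc, Gamma_add_one hxn.ne']

theorem Gamma_add_nat_le_Gamma_mul_add {lam x : ℝ} (hlam : 1 ≤ lam) (hx : 1 ≤ x) (m : ℕ) :
    Gamma (x + m) ≤ Gamma (lam * m + x) := by
  rcases m.eq_zero_or_pos with rfl | hm
  · simp
  · have hm : (1 : ℝ) ≤ m := by exact_mod_cast hm
    exact Gamma_strictMonoOn_Ici.monotoneOn (Set.mem_Ici.mpr (by linarith))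
      (Set.mem_Ici.mpr (by nlinarith)) (by nlinarith)

end Real

noncomputable def wrightDerivCoeff (lam mu : ℝ) (m : ℕ) : ℝ :=
  Gamma mu * (m + 1) / (m ! * Gamma (lam * m + mu))

theorem normWrightDeriv_eq_tsum (lam mu : ℝ) (z : ℂ) :
    normWrightDeriv lam mu z = ∑' m, (wrightDerivCoeff lam mu m : ℂ) * z ^ m :=
  rfl

section WrightDerivCoeff

variable {lam mu : ℝ}

theorem wrightDerivCoeff_zero (hmu : 0 < mu) : wrightDerivCoeff lam mu 0 = 1 := by
  simp [wrightDerivCoeff, (Gamma_pos_of_pos hmu).ne']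

theorem wrightDerivCoeff_nonneg (hlam : 0 ≤ lam) (hmu : 0 < mu) (m : ℕ) :
    0 ≤ wrightDerivCoeff lam mu m := by
  have := Gamma_pos_of_pos hmu
  have := Gamma_pos_of_pos (show 0 < lam * m + mu by positivity)
  unfold wrightDerivCoeff
  positivity

theorem wrightDerivCoeff_le (hlam : 1 ≤ lam) (hmu : 1 < mu) (m : ℕ) :
    wrightDerivCoeff lam mu m ≤ 2 * mu⁻¹ ^ m := by
  have hmu0 : 0 < mu := by linarith
  have hGamma : Gamma mu ≤ mu⁻¹ ^ m * Gamma (lam * m + mu) := by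
    rw [inv_pow, ← div_eq_inv_mul, le_div_iff₀ (by positivity), mul_comm]
    exact (pow_mul_Gamma_le_Gamma_add_nat hmu0 m).trans
      (Gamma_add_nat_le_Gamma_mul_add hlam hmu.le m)
  have hfact : (m : ℝ) + 1 ≤ 2 * m ! := by exact_mod_cast m.add_one_le_two_mul_factorial
  have hGamma_pos := Gamma_pos_of_pos (show 0 < lam * m + mu by positivity)
  unfold wrightDerivCoeff
  rw [div_le_iff₀ (by positivity)]
  calc Gamma mu * (m + 1) ≤ (mu⁻¹ ^ m * Gamma (lam * m + mu)) * (2 * m !) := by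
        gcongr
    _ = 2 * mu⁻¹ ^ m * (m ! * Gamma (lam * m + mu)) := by ring

end WrightDerivCoeff

theorem norm_tsum_le_of_norm_le_two_mul_geometric {E : Type*} [NormedAddCommGroup E]
    [CompleteSpace E] {a : ℕ → E} {r : ℝ} (hr0 : 0 ≤ r) (hr1 : r < 1) (h0 : ‖a 0‖ ≤ 1)
    (h : ∀ m, ‖a (m + 1)‖ ≤ 2 * r ^ (m + 1)) :
    ‖∑' m, a m‖ ≤ (1 + r) / (1 - r) := by
  have hgeom : HasSum (fun m : ℕ => 2 * r ^ (m + 1)) (2 * r / (1 - r)) := by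
    simpa [pow_succ', mul_assoc, div_eq_mul_inv] using
      (hasSum_geometric_of_lt_one hr0 hr1).mul_left (2 * r)
  have htail : Summable fun m => ‖a (m + 1)‖ :=
    .of_nonneg_of_le (fun _ => norm_nonneg _) h hgeom.summable
  have hs : Summable a := (summable_nat_add_iff 1).mp htail.of_norm
  have hr1' : 1 - r ≠ 0 := by linarith
  calc ‖∑' m, a m‖ = ‖a 0 + ∑' m, a (m + 1)‖ := by rw [hs.tsum_eq_zero_add]
    _ ≤ ‖a 0‖ + ∑' m, ‖a (m + 1)‖ :=
      (norm_add_le _ _).trans (add_le_add_right (norm_tsum_le_tsum_norm htail) _)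
    _ ≤ 1 + 2 * r / (1 - r) := add_le_add h0 (hasSum_le h htail.hasSum hgeom)
    _ = (1 + r) / (1 - r) := by field_simp; ring

/-- If `λ ≥ 1` and `μ > 1`, then `|𝒲'_{λ,μ}(z)| ≤ (μ+1)/(μ-1)` on the open unit disc. -/
theorem abs_normWrightDeriv_le (lam mu : ℝ) (hlam : 1 ≤ lam) (hmu : 1 < mu) :
    ∀ z : ℂ, ‖z‖ < 1 → ‖normWrightDeriv lam mu z‖ ≤ (mu + 1) / (mu - 1) := by
  intro z hz
  have hmu0 : 0 < mu := by linarith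
  have hterm (m : ℕ) : ‖(wrightDerivCoeff lam mu m : ℂ) * z ^ m‖ ≤ wrightDerivCoeff lam mu m := by
    have hc := wrightDerivCoeff_nonneg (lam := lam) (by linarith) hmu0 m
    rw [norm_mul, Complex.norm_real, norm_pow, Real.norm_of_nonneg hc]
    exact mul_le_of_le_one_right hc (pow_le_one₀ (norm_nonneg _) hz.le)
  rw [normWrightDeriv_eq_tsum]
  refine (norm_tsum_le_of_norm_le_two_mul_geometric (by positivity) (inv_lt_one_of_one_lt₀ hmu)
    ((hterm 0).trans_eq (wrightDerivCoeff_zero hmu0))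
    fun m => (hterm _).trans (wrightDerivCoeff_le hlam hmu _)).trans_eq ?_
  field_simp
end

section
/- Let λ, μ be real numbers with λ ≥ 1 and μ > 1/2. Then for every z in the open unit disc 𝕌, the Alexander transform of the normalized Wright function satisfies |𝔸[𝒲_{λ,μ}](z)| ≤ 2μ/(2μ−1). -/
/-!
Bounding each coefficient of the series by a power of `1/(2μ)` reduces the claim to a geometric
series: `|𝔸[𝒲_{λ,μ}](z)| ≤ ∑ (2μ)^{-m} = 2μ/(2μ-1)`. The coefficient bound
`Γ(μ)/((m+1)! Γ(λm+μ)) ≤ (2μ)^{-m}` combines `Γ(m+μ) ≤ Γ(λm+μ)`, valid since `Γ` increases on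
`[3/2, ∞)`, with `Γ(m+μ) = (μ)_m Γ(μ)` and `(m+1)! (μ)_m ≥ (2μ)^m`. That `Γ` increases on
`[3/2, ∞)` follows from convexity once `Γ'(3/2) = √π (1 - (γ + 2 log 2)/2)` is seen to be
positive, i.e. `γ + 2 log 2 < 2`.
-/

/-- The Alexander transform of the normalized Wright function:
`𝔸[𝒲_{λ,μ}](z) = z + ∑_{m=1}^∞ (Γ(μ)/((m+1)! Γ(λm+μ))) z^{m+1}`
(the `m = 0` term is `z`). -/
noncomputable def alexNormWright (lam mu : ℝ) (z : ℂ) : ℂ :=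
  ∑' m : ℕ,
    ((Real.Gamma mu / (Nat.factorial (m + 1) * Real.Gamma (lam * m + mu)) : ℝ) : ℂ) * z ^ (m + 1)

open Set

lemma ConvexOn.monotoneOn_of_hasDerivAt_nonneg {S : Set ℝ} {f : ℝ → ℝ} {a f' : ℝ}
    (hf : ConvexOn ℝ S f) (ha : a ∈ S) (hderiv : HasDerivAt f f' a) (hf' : 0 ≤ f') :
    MonotoneOn f (S ∩ Ici a) := by
  rintro x ⟨hxS, hax : a ≤ x⟩ y ⟨hyS, -⟩ hxy
  rcases hxy.eq_or_lt with rfl | hxy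
  · rfl
  have hslope : 0 ≤ (f y - f x) / (y - x) := by
    rcases hax.eq_or_lt with rfl | hax
    · simpa [slope_def_field] using hf'.trans (hf.le_slope_of_hasDerivAt ha hyS hxy hderiv)
    · have h := hf.le_slope_of_hasDerivAt ha hxS hax hderiv
      rw [slope_def_field] at h
      exact hf'.trans (h.trans (hf.slope_mono_adjacent ha hyS hax hxy))
  have := (le_div_iff₀ (sub_pos.mpr hxy)).mp hslope
  linarith

namespace Real

lemma eulerMascheroniConstant_add_two_mul_log_two_lt_two :
    eulerMascheroniConstant + 2 * log 2 < 2 := by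
  -- `16 = 2 ^ 4` keeps the logarithm a multiple of `log 2`; `H₈ - log 8` is not sharp enough
  have h16 : eulerMascheroniSeq' 16 = harmonic 16 - 4 * log 2 := by
    rw [eulerMascheroniSeq', if_neg (by norm_num), show ((16 : ℕ) : ℝ) = 2 ^ 4 by norm_num,
      log_pow]
    norm_num
  have hH : (harmonic 16 : ℝ) < 3.381 := by
    simp only [harmonic, Finset.sum_range_succ, Finset.sum_range_zero]
    norm_num
  linarith [eulerMascheroniConstant_lt_eulerMascheroniSeq' 16, log_two_gt_d9]

lemma hasDerivAt_Gamma_three_halves :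
    HasDerivAt Gamma (√π * (1 - (eulerMascheroniConstant + 2 * log 2) / 2)) (3 / 2) := by
  have hrec : (fun s => s * Gamma s) =ᶠ[nhds (1 / 2 : ℝ)] fun s => Gamma (s + 1) := by
    filter_upwards [lt_mem_nhds (by norm_num : (0 : ℝ) < 1 / 2)] with s hs
    rw [Gamma_add_one hs.ne']
  have h := ((hasDerivAt_id (1 / 2 : ℝ)).mul hasDerivAt_Gamma_one_half).congr_of_eventuallyEq
    hrec.symm
  have h' := HasDerivAt.comp_sub_const (3 / 2 : ℝ) 1 (by norm_num at h ⊢; exact h)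
  simp only [sub_add_cancel] at h'
  refine h'.congr_deriv ?_
  rw [Gamma_one_half_eq]
  ring

lemma Gamma_monotoneOn_Ici_three_halves : MonotoneOn Gamma (Ici (3 / 2)) := by
  have hderiv_nonneg : 0 ≤ √π * (1 - (eulerMascheroniConstant + 2 * log 2) / 2) :=
    mul_nonneg (sqrt_nonneg π) (by linarith [eulerMascheroniConstant_add_two_mul_log_two_lt_two])
  have h := convexOn_Gamma.monotoneOn_of_hasDerivAt_nonneg (by norm_num)
    hasDerivAt_Gamma_three_halves hderiv_nonneg
  rwa [inter_eq_right.mpr (Ici_subset_Ioi.mpr (by norm_num))] at h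

lemma Gamma_mul_two_mul_pow_le {mu : ℝ} (hmu : 0 < mu) (m : ℕ) :
    Gamma mu * (2 * mu) ^ m ≤ (m + 1).factorial * Gamma (m + mu) := by
  induction m with
  | zero => simp
  | succ k ih =>
    have hk : 0 < (k : ℝ) + mu := by positivity
    have hstep : 2 * mu ≤ ((k : ℝ) + 2) * (k + mu) := by nlinarith [k.cast_nonneg (α := ℝ)]
    calc Gamma mu * (2 * mu) ^ (k + 1)
        = 2 * mu * (Gamma mu * (2 * mu) ^ k) := by ring
      _ ≤ ((k : ℝ) + 2) * (k + mu) * ((k + 1).factorial * Gamma (k + mu)) := by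
        gcongr
      _ = (k + 1 + 1).factorial * Gamma ((k + 1 : ℕ) + mu) := by
        push_cast [Nat.factorial_succ (k + 1)]
        rw [add_right_comm (k : ℝ) 1 mu, Gamma_add_one hk.ne']
        ring

end Real

open Real

noncomputable def alexNormWrightCoeff (lam mu : ℝ) (m : ℕ) : ℝ :=
  Gamma mu / ((m + 1).factorial * Gamma (lam * m + mu))

lemma abs_alexNormWrightCoeff_le {lam mu : ℝ} (hlam : 1 ≤ lam) (hmu : 1 / 2 ≤ mu) (m : ℕ) :
    |alexNormWrightCoeff lam mu m| ≤ (2 * mu)⁻¹ ^ m := by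
  have hmu0 : 0 < mu := by linarith
  have hm : (m : ℝ) ≤ lam * m := le_mul_of_one_le_left m.cast_nonneg hlam
  have hGamma_mu_pos : 0 < Gamma mu := Gamma_pos_of_pos hmu0
  have hGamma_pos : 0 < Gamma (lam * m + mu) := Gamma_pos_of_pos (by positivity)
  have hGamma_le : Gamma (m + mu) ≤ Gamma (lam * m + mu) := by
    rcases m.eq_zero_or_pos with rfl | hm_pos
    · simp
    have : (1 : ℝ) ≤ m := by exact_mod_cast hm_pos
    exact Gamma_monotoneOn_Ici_three_halves (mem_Ici.mpr (by linarith))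
      (mem_Ici.mpr (by linarith)) (by linarith)
  rw [alexNormWrightCoeff, abs_of_nonneg (by positivity), inv_pow,
    div_le_iff₀ (by positivity), inv_mul_eq_div, le_div_iff₀ (by positivity)]
  exact (Gamma_mul_two_mul_pow_le hmu0 m).trans (by gcongr)

lemma norm_alexNormWrightCoeff_mul_pow_le {lam mu : ℝ} (hlam : 1 ≤ lam) (hmu : 1 / 2 ≤ mu)
    {z : ℂ} (hz : ‖z‖ ≤ 1) (m : ℕ) :
    ‖(alexNormWrightCoeff lam mu m : ℂ) * z ^ (m + 1)‖ ≤ (2 * mu)⁻¹ ^ m := by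
  rw [norm_mul, norm_pow, Complex.norm_real, norm_eq_abs]
  exact (mul_le_of_le_one_right (abs_nonneg _) (pow_le_one₀ (norm_nonneg z) hz)).trans
    (abs_alexNormWrightCoeff_le hlam hmu m)

/-- If `λ ≥ 1` and `μ > 1/2`, then `|𝔸[𝒲_{λ,μ}](z)| ≤ 2μ/(2μ-1)` on the open unit disc. -/
theorem abs_alexNormWright_le (lam mu : ℝ) (hlam : 1 ≤ lam) (hmu : 1 / 2 < mu) :
    ∀ z : ℂ, ‖z‖ < 1 → ‖alexNormWright lam mu z‖ ≤ 2 * mu / (2 * mu - 1) := by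
  intro z hz
  have hratio : (2 * mu)⁻¹ < 1 := inv_lt_one_of_one_lt₀ (by linarith)
  have hgeom := hasSum_geometric_of_lt_one (by positivity) hratio
  calc ‖alexNormWright lam mu z‖
      ≤ (1 - (2 * mu)⁻¹)⁻¹ :=
        tsum_of_norm_bounded hgeom (norm_alexNormWrightCoeff_mul_pow_le hlam hmu.le hz.le)
    _ = 2 * mu / (2 * mu - 1) := by
        have : 2 * mu - 1 ≠ 0 := by linarith
        field_simp
end

section
/- Let λ, μ be real numbers with λ ≥ 1 and λ + μ > 1/2. Then for every z in the open unit disc 𝕌, the derivative of the second normalized Wright function satisfies |𝕎'_{λ,μ}(z)| ≤ (2(λ+μ)+1)/(2(λ+μ)−1), where 𝕎'_{λ,μ}(z) = 1 + ∑_{m=1}^∞ (Γ(λ+μ)(m+1)/((m+1)! Γ(λm+λ+μ))) z^m. -/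
/-!
Write `a = λ + μ`; the `m`-th coefficient of `𝕎'` is `Γ(a) / (m! Γ(λm + a))`, and on the disc
`𝕎'` is dominated by the sum of the coefficients. For `m ≥ 2`, monotonicity of `Γ` on `[2, ∞)`
bounds the coefficient by `1 / (m! (a)_m) ≤ a⁻¹ (2a + 1)^(1-m)`, and these sum to `1 / (2a²)`.
For `m = 1` the bound `Γ(a) / Γ(λ + a) ≤ 1 / a` would need monotonicity of `Γ` on `[a + 1, ∞)`,
which convexity does not give when `a + 1 < 2`; there one only gets `Γ(a + 1) ≤ 1` and
`Γ(λ + a) ≥ a`, hence `1 / a²`. Both `1 + 1/a + 1/(2a²)` and `1 + 3/(2a²)` are at most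
`(2a + 1) / (2a - 1)` once `a > 1/2`.
-/

open Real Set Nat

/-- The derivative of the second normalized Wright function:
`𝕎'_{λ,μ}(z) = 1 + ∑_{m=1}^∞ (Γ(λ+μ)(m+1)/((m+1)! Γ(λm+λ+μ))) z^m`
(the `m = 0` term is `1`). -/
noncomputable def normWright2Deriv (lam mu : ℝ) (z : ℂ) : ℂ :=
  ∑' m : ℕ,
    ((Real.Gamma (lam + mu) * (m + 1) /
        (Nat.factorial (m + 1) * Real.Gamma (lam * m + lam + mu)) : ℝ) : ℂ) * z ^ m

namespace Real

lemma Gamma_le_one_of_mem_Icc {x : ℝ} (hx : x ∈ Icc 1 2) : Gamma x ≤ 1 := by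
  have h := convexOn_Gamma.le_on_segment (𝕜 := ℝ) (mem_Ioi.2 one_pos) (mem_Ioi.2 two_pos)
    (by rwa [segment_eq_Icc one_le_two])
  simpa [Gamma_two] using h

lemma min_one_sub_one_le_Gamma {x : ℝ} (hx : 1 ≤ x) : min 1 (x - 1) ≤ Gamma x := by
  rcases le_or_gt 2 x with h2 | h2
  · calc min 1 (x - 1) ≤ Gamma 2 := Gamma_two ▸ min_le_left _ _
      _ ≤ Gamma x := Gamma_strictMonoOn_Ici.monotoneOn self_mem_Ici h2 h2
  · have h := convexOn_Gamma.slope_mono_adjacent (mem_Ioi.2 (by linarith : (0:ℝ) < x))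
      (mem_Ioi.2 (by norm_num : (0:ℝ) < 3)) h2 (by norm_num : (2:ℝ) < 3)
    rw [Gamma_two, show Gamma 3 = 2 by simp, div_le_iff₀ (by linarith)] at h
    exact (min_le_right _ _).trans (by linarith)

lemma mul_min_one_mul_Gamma_le_Gamma_add {a l : ℝ} (ha : 0 < a) (hl : 1 ≤ l) :
    a * min a 1 * Gamma a ≤ Gamma (l + a) := by
  rw [mul_right_comm, ← Gamma_add_one ha.ne']
  rcases le_total 1 a with h1 | h1
  · rw [min_eq_right h1, mul_one]
    exact Gamma_strictMonoOn_Ici.monotoneOn (mem_Ici.2 (by linarith)) (mem_Ici.2 (by linarith))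
      (by linarith)
  · rw [min_eq_left h1]
    calc Gamma (a + 1) * a ≤ 1 * a :=
          mul_le_mul_of_nonneg_right (Gamma_le_one_of_mem_Icc ⟨by linarith, by linarith⟩) ha.le
      _ ≤ min 1 (l + a - 1) := le_min (by linarith) (by linarith)
      _ ≤ Gamma (l + a) := min_one_sub_one_le_Gamma (by linarith)

lemma mul_pow_mul_Gamma_le_factorial_mul_Gamma {a : ℝ} (ha : 0 < a) (k : ℕ) :
    a * (2 * a + 1) ^ k * Gamma a ≤ (k + 1)! * Gamma ((k + 1 : ℕ) + a) := by
  induction k with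
  | zero => simp [add_comm (1 : ℝ), Gamma_add_one ha.ne']
  | succ k ih =>
    have hstep : 2 * a + 1 ≤ ((k + 2 : ℕ) : ℝ) * ((k + 1 : ℕ) + a) := by
      push_cast; nlinarith [(k.cast_nonneg : (0 : ℝ) ≤ k)]
    have hΓ : Gamma ((k + 2 : ℕ) + a) = ((k + 1 : ℕ) + a) * Gamma ((k + 1 : ℕ) + a) := by
      rw [← Gamma_add_one (by positivity)]; push_cast; ring_nf
    calc a * (2 * a + 1) ^ (k + 1) * Gamma a
        = (2 * a + 1) * (a * (2 * a + 1) ^ k * Gamma a) := by ring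
      _ ≤ (((k + 2 : ℕ) : ℝ) * ((k + 1 : ℕ) + a)) * ((k + 1)! * Gamma ((k + 1 : ℕ) + a)) :=
          mul_le_mul hstep ih (by have := Gamma_pos_of_pos ha; positivity) (by positivity)
      _ = (k + 2)! * Gamma ((k + 2 : ℕ) + a) := by
          rw [hΓ, factorial_succ (k + 1)]; push_cast; ring

end Real

noncomputable def wrightCoeff (lam mu : ℝ) (m : ℕ) : ℝ :=
  Gamma (lam + mu) * (m + 1) / ((m + 1)! * Gamma (lam * m + lam + mu))

lemma normWright2Deriv_eq_tsum (lam mu : ℝ) (z : ℂ) :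
    normWright2Deriv lam mu z = ∑' m, (wrightCoeff lam mu m : ℂ) * z ^ m := rfl

lemma wrightCoeff_eq (lam mu : ℝ) (m : ℕ) :
    wrightCoeff lam mu m = Gamma (lam + mu) / (m ! * Gamma (lam * m + (lam + mu))) := by
  rw [wrightCoeff, factorial_succ, cast_mul, cast_succ, mul_assoc, ← add_assoc,
    mul_comm _ ((m : ℝ) + 1), mul_div_mul_left _ _ (by positivity)]

noncomputable def wrightMajorant (a : ℝ) : ℕ → ℝ
  | 0 => 1
  | 1 => 1 / (a * min a 1)
  | k + 2 => 1 / a * (1 / (2 * a + 1)) ^ (k + 1)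

section

variable {lam mu : ℝ}

lemma wrightCoeff_nonneg (hlam : 0 ≤ lam) (ha : 0 < lam + mu) (m : ℕ) :
    0 ≤ wrightCoeff lam mu m := by
  have := Gamma_pos_of_pos ha
  have := Gamma_pos_of_pos (by positivity : 0 < lam * m + (lam + mu))
  rw [wrightCoeff_eq]
  positivity

lemma wrightCoeff_zero (ha : 0 < lam + mu) : wrightCoeff lam mu 0 = 1 := by
  simp [wrightCoeff_eq, (Gamma_pos_of_pos ha).ne']

lemma wrightCoeff_one_le (hlam : 1 ≤ lam) (ha : 0 < lam + mu) :
    wrightCoeff lam mu 1 ≤ 1 / ((lam + mu) * min (lam + mu) 1) := by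
  rw [wrightCoeff_eq, cast_one, mul_one, factorial_one, cast_one, one_mul,
    div_le_div_iff₀ (Gamma_pos_of_pos (by linarith)) (by positivity), mul_comm]
  simpa using mul_min_one_mul_Gamma_le_Gamma_add ha hlam

lemma wrightCoeff_add_two_le (hlam : 1 ≤ lam) (ha : 0 < lam + mu) (k : ℕ) :
    wrightCoeff lam mu (k + 2) ≤ 1 / (lam + mu) * (1 / (2 * (lam + mu) + 1)) ^ (k + 1) := by
  set a := lam + mu
  have hΓ := Gamma_pos_of_pos ha
  have hmono : Gamma ((k + 2 : ℕ) + a) ≤ Gamma (lam * (k + 2 : ℕ) + a) :=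
    Gamma_strictMonoOn_Ici.monotoneOn (mem_Ici.2 (by push_cast; linarith))
      (mem_Ici.2 (by push_cast; nlinarith)) (by push_cast; nlinarith)
  calc wrightCoeff lam mu (k + 2) ≤ Gamma a / (a * (2 * a + 1) ^ (k + 1) * Gamma a) := by
        rw [wrightCoeff_eq]
        refine div_le_div_of_nonneg_left hΓ.le (by positivity) ?_
        exact (mul_pow_mul_Gamma_le_factorial_mul_Gamma ha (k + 1)).trans
          (mul_le_mul_of_nonneg_left hmono (by positivity))
    _ = 1 / a * (1 / (2 * a + 1)) ^ (k + 1) := by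
        rw [div_pow, one_pow]
        field_simp

lemma wrightCoeff_le_wrightMajorant (hlam : 1 ≤ lam) (ha : 0 < lam + mu) :
    ∀ m, wrightCoeff lam mu m ≤ wrightMajorant (lam + mu) m
  | 0 => (wrightCoeff_zero ha).le
  | 1 => wrightCoeff_one_le hlam ha
  | k + 2 => wrightCoeff_add_two_le hlam ha k

end

lemma hasSum_wrightMajorant {a : ℝ} (ha : 0 < a) :
    HasSum (wrightMajorant a) (1 + 1 / (a * min a 1) + 1 / (2 * a ^ 2)) := by
  set r := 1 / (2 * a + 1)
  have hr : r < 1 := by rw [div_lt_one (by positivity)]; linarith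
  have htail : (fun k => wrightMajorant a (k + 2)) = fun k => 1 / a * r * r ^ k := by
    ext k
    simp only [wrightMajorant]
    ring
  have hval : 1 / a * r * (1 - r)⁻¹ = 1 / (2 * a ^ 2) := by
    simp only [r]
    field_simp
    ring
  have hgeo := (hasSum_geometric_of_lt_one (by positivity) hr).mul_left (1 / a * r)
  rw [hval, ← htail] at hgeo
  refine (hasSum_nat_add_iff' 2).mp ?_
  simpa [Finset.sum_range_succ, wrightMajorant] using hgeo

lemma one_add_one_div_mul_min_add_one_div_le {a : ℝ} (ha : 1 / 2 < a) :
    1 + 1 / (a * min a 1) + 1 / (2 * a ^ 2) ≤ (2 * a + 1) / (2 * a - 1) := by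
  rcases min_cases a 1 with ⟨hmin, -⟩ | ⟨hmin, -⟩ <;>
  · rw [hmin]
    field_simp
    rw [le_div_iff₀ (by linarith)]
    nlinarith [sq_nonneg (2 * a - 3 / 2)]

/-- If `λ ≥ 1` and `λ + μ > 1/2`, then `|𝕎'_{λ,μ}(z)| ≤ (2(λ+μ)+1)/(2(λ+μ)-1)` on the
open unit disc. -/
theorem abs_normWright2Deriv_le (lam mu : ℝ) (hlam : 1 ≤ lam) (hmu : 1 / 2 < lam + mu) :
    ∀ z : ℂ, ‖z‖ < 1 →
      ‖normWright2Deriv lam mu z‖ ≤ (2 * (lam + mu) + 1) / (2 * (lam + mu) - 1) := by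
  intro z hz
  have ha : 0 < lam + mu := by linarith
  rw [normWright2Deriv_eq_tsum]
  refine (tsum_of_norm_bounded (hasSum_wrightMajorant ha) fun m => ?_).trans
    (one_add_one_div_mul_min_add_one_div_le hmu)
  have hc := wrightCoeff_nonneg (by linarith) ha m
  calc ‖(wrightCoeff lam mu m : ℂ) * z ^ m‖ = wrightCoeff lam mu m * ‖z‖ ^ m := by
        rw [norm_mul, norm_pow, Complex.norm_real, Real.norm_of_nonneg hc]
    _ ≤ wrightCoeff lam mu m := mul_le_of_le_one_right hc (pow_le_one₀ (norm_nonneg z) hz.le)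
    _ ≤ wrightMajorant (lam + mu) m := wrightCoeff_le_wrightMajorant hlam ha m
end

section
/- Let λ, μ be real numbers with λ ≥ 1 and μ > 3/2, and let n be a natural number. Then for every z in the open unit disc 𝕌 the function 𝒲_{λ,μ}(z) is nonzero for z ≠ 0 and Re((𝒲_{λ,μ})_n(z)/𝒲_{λ,μ}(z)) ≥ (2μ−1)/(2μ+1), where at z = 0 the ratio is understood as its analytic extension with value 1. -/
/-- The normalized Wright function
`𝒲_{λ,μ}(z) = z + ∑_{m=1}^∞ (Γ(μ)/(m! Γ(λm+μ))) z^{m+1}`. -/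
noncomputable def normWright (lam mu : ℝ) (z : ℂ) : ℂ :=
  ∑' m : ℕ, ((Real.Gamma mu / (Nat.factorial m * Real.Gamma (lam * m + mu)) : ℝ) : ℂ) * z ^ (m + 1)

/-- The `n`-th partial sum `(𝒲_{λ,μ})_n(z) = z + ∑_{m=1}^n (Γ(μ)/(m! Γ(λm+μ))) z^{m+1}`. -/
noncomputable def normWrightPartial (lam mu : ℝ) (n : ℕ) (z : ℂ) : ℂ :=
  ∑ m ∈ Finset.range (n + 1),
    ((Real.Gamma mu / (Nat.factorial m * Real.Gamma (lam * m + mu)) : ℝ) : ℂ) * z ^ (m + 1)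

lemma wright_aux_pochhammer (mu : ℝ) (hmu : 0 < mu) : ∀ k : ℕ,
    mu ^ k * Real.Gamma mu ≤ Real.Gamma (mu + k) := by
  intro k
  induction k with
  | zero => simp
  | succ k ih =>
    have hk : (mu + (k : ℝ)) ≠ 0 := by positivity
    have h1 : Real.Gamma (mu + (k + 1 : ℕ)) = (mu + k) * Real.Gamma (mu + k) := by
      rw [show (mu + ((k : ℕ) + 1 : ℕ) : ℝ) = (mu + k) + 1 by push_cast; ring,
        Real.Gamma_add_one hk]
    rw [h1]
    have h2 : mu ^ (k + 1) * Real.Gamma mu = mu * (mu ^ k * Real.Gamma mu) := by ring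
    rw [h2]
    have h3 : mu * (mu ^ k * Real.Gamma mu) ≤ mu * Real.Gamma (mu + k) :=
      mul_le_mul_of_nonneg_left ih hmu.le
    have h4 : 0 < Real.Gamma (mu + k) := Real.Gamma_pos_of_pos (by positivity)
    nlinarith [Nat.cast_nonneg (α := ℝ) k]

lemma wright_aux_coeff (lam mu : ℝ) (hlam : 1 ≤ lam) (hmu : 3 / 2 < mu) (m : ℕ) :
    Real.Gamma mu / ((Nat.factorial (m + 1) : ℝ) * Real.Gamma (lam * (m + 1 : ℕ) + mu)) ≤
      1 / mu * (1 / (2 * mu)) ^ m := by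
  have hmu0 : (0 : ℝ) < mu := by linarith
  have hΓ : 0 < Real.Gamma mu := Real.Gamma_pos_of_pos hmu0
  have hm1 : (1 : ℝ) ≤ (m : ℝ) + 1 := by nlinarith [Nat.cast_nonneg (α := ℝ) m]
  have hmem1 : ((m : ℝ) + 1 + mu) ∈ Set.Ici (2 : ℝ) := by
    simp only [Set.mem_Ici]; nlinarith [Nat.cast_nonneg (α := ℝ) m]
  have hmem2 : (lam * ((m : ℝ) + 1) + mu) ∈ Set.Ici (2 : ℝ) := by
    simp only [Set.mem_Ici]; nlinarith [Nat.cast_nonneg (α := ℝ) m]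
  have hle : (m : ℝ) + 1 + mu ≤ lam * ((m : ℝ) + 1) + mu := by
    nlinarith [Nat.cast_nonneg (α := ℝ) m]
  have hmono := Real.Gamma_strictMonoOn_Ici.monotoneOn hmem1 hmem2 hle
  have hpoch := wright_aux_pochhammer mu hmu0 (m + 1)
  have hpoch' : mu ^ (m + 1) * Real.Gamma mu ≤ Real.Gamma ((m : ℝ) + 1 + mu) := by
    rw [show ((m : ℝ) + 1 + mu) = mu + ((m + 1 : ℕ) : ℝ) by push_cast; ring]
    exact hpoch
  have hfact : (2 : ℝ) ^ m ≤ (Nat.factorial (m + 1) : ℝ) := by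
    have := Nat.factorial_mul_pow_le_factorial (m := 1) (n := m)
    simp only [Nat.factorial_one, one_mul] at this
    calc (2 : ℝ) ^ m = ((2 ^ m : ℕ) : ℝ) := by push_cast; ring
    _ ≤ ((Nat.factorial (1 + m) : ℕ) : ℝ) := by exact_mod_cast this
    _ = (Nat.factorial (m + 1) : ℝ) := by rw [Nat.add_comm]
  have hden : (2 : ℝ) ^ m * (mu ^ (m + 1) * Real.Gamma mu) ≤
      (Nat.factorial (m + 1) : ℝ) * Real.Gamma (lam * (m + 1 : ℕ) + mu) := by
    have h2 : Real.Gamma (lam * ((m + 1 : ℕ) : ℝ) + mu) = Real.Gamma (lam * ((m : ℝ) + 1) + mu) := by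
      push_cast; ring_nf
    rw [h2]
    have := hpoch'.trans hmono
    apply mul_le_mul hfact this (by positivity) (by positivity)
  have hdpos : (0 : ℝ) < 2 ^ m * (mu ^ (m + 1) * Real.Gamma mu) := by positivity
  calc Real.Gamma mu / ((Nat.factorial (m + 1) : ℝ) * Real.Gamma (lam * (m + 1 : ℕ) + mu))
      ≤ Real.Gamma mu / (2 ^ m * (mu ^ (m + 1) * Real.Gamma mu)) := by gcongr
    _ = 1 / mu * (1 / (2 * mu)) ^ m := by
        rw [div_pow, one_pow, mul_pow]
        field_simp
        ring

/-- If `λ ≥ 1` and `μ > 3/2`, then on the open unit disc `𝒲_{λ,μ}` is nonzero away from `0`,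
and `Re((𝒲_{λ,μ})_n(z)/𝒲_{λ,μ}(z)) ≥ (2μ-1)/(2μ+1)`, the ratio being understood as its
analytic extension, with value `1`, at `z = 0`. -/
theorem re_partial_div_normWright (lam mu : ℝ) (hlam : 1 ≤ lam) (hmu : 3 / 2 < mu) (n : ℕ) :
    ∀ z : ℂ, ‖z‖ < 1 →
      (z ≠ 0 → normWright lam mu z ≠ 0) ∧
      (2 * mu - 1) / (2 * mu + 1) ≤
        (if z = 0 then (1 : ℂ) else normWrightPartial lam mu n z / normWright lam mu z).re := by
  intro z hz1
  have hmu0 : (0 : ℝ) < mu := by linarith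
  have hΓ : 0 < Real.Gamma mu := Real.Gamma_pos_of_pos hmu0
  set A : ℕ → ℝ := fun m => Real.Gamma mu / (Nat.factorial m * Real.Gamma (lam * m + mu)) with hA
  have hA0 : A 0 = 1 := by
    simp only [hA, Nat.factorial_zero, Nat.cast_zero, Nat.cast_one, mul_zero, zero_add, one_mul]
    exact div_self hΓ.ne'
  have hApos : ∀ m : ℕ, 0 < A m := by
    intro m
    have h1 : (0 : ℝ) < lam * m + mu := by nlinarith [Nat.cast_nonneg (α := ℝ) m]
    have := Real.Gamma_pos_of_pos h1
    have : (0 : ℝ) < Nat.factorial m := by positivity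
    simp only [hA]
    positivity
  have hAle : ∀ m : ℕ, A (m + 1) ≤ 1 / mu * (1 / (2 * mu)) ^ m := fun m =>
    wright_aux_coeff lam mu hlam hmu m
  have hhalf : (0 : ℝ) ≤ 1 / (2 * mu) := by positivity
  have hhalf1 : 1 / (2 * mu) < 1 := by
    rw [div_lt_one (by linarith)]; linarith
  have hgeo : Summable (fun m : ℕ => 1 / mu * (1 / (2 * mu)) ^ m) :=
    (summable_geometric_of_lt_one hhalf hhalf1).mul_left _
  have hAsum1 : Summable (fun m => A (m + 1)) :=
    hgeo.of_nonneg_of_le (fun m => (hApos _).le) hAle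
  have hAsum : Summable A := (summable_nat_add_iff 1).mp hAsum1
  -- total tail sum bound
  have hS : ∑' m, A (m + 1) ≤ 2 / (2 * mu - 1) := by
    have h1 : ∑' m, A (m + 1) ≤ ∑' m : ℕ, 1 / mu * (1 / (2 * mu)) ^ m :=
      Summable.tsum_le_tsum hAle hAsum1 hgeo
    have h2 : ∑' m : ℕ, 1 / mu * (1 / (2 * mu)) ^ m = 1 / mu * (1 - 1 / (2 * mu))⁻¹ := by
      rw [tsum_mul_left, tsum_geometric_of_lt_one hhalf hhalf1]
    have h3 : 1 / mu * (1 - 1 / (2 * mu))⁻¹ = 2 / (2 * mu - 1) := by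
      have hne1 : (2 * mu - 1) ≠ 0 := by linarith
      have hne2 : (2 * mu) ≠ 0 := by linarith
      rw [show (1 : ℝ) - 1 / (2 * mu) = (2 * mu - 1) / (2 * mu) by field_simp, inv_div]
      field_simp
    rw [h2, h3] at h1
    exact h1
  -- complex series
  set f : ℕ → ℂ := fun m => ((A m : ℝ) : ℂ) * z ^ (m + 1) with hf
  have hfnorm : ∀ m : ℕ, ‖f m‖ = A m * ‖z‖ ^ (m + 1) := by
    intro m
    simp only [hf, norm_mul, norm_pow, Complex.norm_real, Real.norm_eq_abs,
      abs_of_pos (hApos m)]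
  have hfsum : Summable f := by
    apply Summable.of_norm
    apply hAsum.of_nonneg_of_le (fun m => by positivity)
    intro m
    rw [hfnorm m]
    calc A m * ‖z‖ ^ (m + 1) ≤ A m * 1 := by
          apply mul_le_mul_of_nonneg_left _ (hApos m).le
          exact pow_le_one₀ (norm_nonneg z) hz1.le
      _ = A m := mul_one _
  have hWeq : normWright lam mu z = ∑' m, f m := rfl
  have hPeq : normWrightPartial lam mu n z = ∑ m ∈ Finset.range (n + 1), f m := rfl
  set T : ℂ := ∑' m, f (m + (n + 1)) with hT
  have hsplit : normWright lam mu z = normWrightPartial lam mu n z + T := by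
    rw [hWeq, hPeq, ← Summable.sum_add_tsum_nat_add (n + 1) hfsum]
  set tau : ℝ := ∑' m, A (m + (n + 1)) with htau
  have htausum : Summable (fun m => A (m + (n + 1))) := (summable_nat_add_iff (n + 1)).mpr hAsum
  have htaupos : 0 < tau :=
    Summable.tsum_pos htausum (fun m => (hApos _).le) 0 (hApos _)
  set sigma : ℝ := ∑ m ∈ Finset.range n, A (m + 1) with hsigma
  have hsigma0 : 0 ≤ sigma := Finset.sum_nonneg fun m _ => (hApos _).le
  have hsum_split : sigma + tau = ∑' m, A (m + 1) := by
    exact Summable.sum_add_tsum_nat_add n hAsum1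
  set q : ℝ := 4 / (2 * mu + 1) with hq
  have hq0 : 0 < q := by positivity
  have hq1 : q ≤ 1 := by
    rw [hq, div_le_one (by linarith)]; linarith
  have hkey : q * sigma + (2 - q) * tau ≤ q := by
    have h1 : q * sigma + (2 - q) * tau ≤ (2 - q) * (sigma + tau) := by nlinarith
    have h2 : sigma + tau ≤ 2 / (2 * mu - 1) := hsum_split ▸ hS
    have h3 : (2 - q) * (sigma + tau) ≤ (2 - q) * (2 / (2 * mu - 1)) := by
      apply mul_le_mul_of_nonneg_left h2 (by linarith)
    have h4 : (2 - q) * (2 / (2 * mu - 1)) = q := by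
      have hne1 : (2 * mu - 1) ≠ 0 := by linarith
      have hne2 : (2 * mu + 1) ≠ 0 := by linarith
      rw [hq]
      field_simp
      ring
    linarith
  by_cases hz0 : z = 0
  · subst hz0
    refine ⟨fun h => absurd rfl h, ?_⟩
    rw [if_pos rfl, Complex.one_re]
    rw [div_le_one (by linarith)]
    linarith
  · have hzpos : 0 < ‖z‖ := norm_pos_iff.mpr hz0
    -- norm of tail
    have hfnormsum : Summable (fun m => ‖f (m + (n + 1))‖) := by
      apply htausum.of_nonneg_of_le (fun m => norm_nonneg _)
      intro m
      rw [hfnorm]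
      calc A (m + (n + 1)) * ‖z‖ ^ (m + (n + 1) + 1) ≤ A (m + (n + 1)) * 1 := by
            apply mul_le_mul_of_nonneg_left _ (hApos _).le
            exact pow_le_one₀ (norm_nonneg z) hz1.le
        _ = A (m + (n + 1)) := mul_one _
    have hTle : ‖T‖ ≤ tau * ‖z‖ ^ 2 := by
      calc ‖T‖ ≤ ∑' m, ‖f (m + (n + 1))‖ := norm_tsum_le_tsum_norm hfnormsum
        _ ≤ ∑' m, A (m + (n + 1)) * ‖z‖ ^ 2 := by
            apply Summable.tsum_le_tsum _ hfnormsum (htausum.mul_right _)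
            intro m
            rw [hfnorm]
            apply mul_le_mul_of_nonneg_left _ (hApos _).le
            exact pow_le_pow_of_le_one (norm_nonneg z) hz1.le (by omega)
        _ = tau * ‖z‖ ^ 2 := by rw [tsum_mul_right]
    have hPz : ‖normWrightPartial lam mu n z - z‖ ≤ sigma * ‖z‖ ^ 2 := by
      have hsplitP : normWrightPartial lam mu n z - z = ∑ m ∈ Finset.range n, f (m + 1) := by
        rw [hPeq, Finset.sum_range_succ']
        have hf0 : f 0 = z := by simp [hf, hA0]
        rw [hf0]; ring
      rw [hsplitP]
      calc ‖∑ m ∈ Finset.range n, f (m + 1)‖ ≤ ∑ m ∈ Finset.range n, ‖f (m + 1)‖ :=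
            norm_sum_le _ _
        _ ≤ ∑ m ∈ Finset.range n, A (m + 1) * ‖z‖ ^ 2 := by
            apply Finset.sum_le_sum
            intro m _
            rw [hfnorm]
            apply mul_le_mul_of_nonneg_left _ (hApos _).le
            exact pow_le_pow_of_le_one (norm_nonneg z) hz1.le (by omega)
        _ = sigma * ‖z‖ ^ 2 := by rw [← Finset.sum_mul]
    set W : ℂ := normWright lam mu z with hW
    set P : ℂ := normWrightPartial lam mu n z with hP
    have hWPT : W = P + T := hsplit
    have hDlow : q * ‖z‖ - q * (sigma * ‖z‖ ^ 2) - (1 - q) * ‖T‖ ≤ ‖(q : ℂ) * W - T‖ := by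
      have hrw : (q : ℂ) * W - T = (q : ℂ) * z + ((q : ℂ) * (P - z) + ((q : ℂ) - 1) * T) := by
        rw [hWPT]; ring
      have h1 : ‖(q : ℂ) * z‖ = q * ‖z‖ := by
        rw [norm_mul, Complex.norm_real, Real.norm_eq_abs, abs_of_pos hq0]
      have h2 : ‖(q : ℂ) * (P - z)‖ ≤ q * (sigma * ‖z‖ ^ 2) := by
        rw [norm_mul, Complex.norm_real, Real.norm_eq_abs, abs_of_pos hq0]
        exact mul_le_mul_of_nonneg_left hPz hq0.le
      have h3 : ‖((q : ℂ) - 1) * T‖ = (1 - q) * ‖T‖ := by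
        rw [norm_mul]
        congr 1
        rw [show ((q : ℂ) - 1) = ((q - 1 : ℝ) : ℂ) by push_cast; ring]
        rw [Complex.norm_real, Real.norm_eq_abs, abs_of_nonpos (by linarith)]
        ring
      have h4 := norm_add_le ((q : ℂ) * (P - z)) (((q : ℂ) - 1) * T)
      have h5 := norm_sub_norm_le ((q : ℂ) * z) (-((q : ℂ) * (P - z) + ((q : ℂ) - 1) * T))
      have h6 : ‖(q : ℂ) * z - -((q : ℂ) * (P - z) + ((q : ℂ) - 1) * T)‖ = ‖(q : ℂ) * W - T‖ := by
        rw [hrw]; congr 1; ring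
      rw [h6, norm_neg, h1] at h5
      linarith
    have hstrict : ‖T‖ < ‖(q : ℂ) * W - T‖ := by
      have hz2 : ‖z‖ ^ 2 < ‖z‖ := by nlinarith
      have hTt : ‖T‖ ≤ tau * ‖z‖ ^ 2 := hTle
      have t1 : ‖T‖ + (q * (sigma * ‖z‖ ^ 2) + (1 - q) * ‖T‖) < q * ‖z‖ := by
        nlinarith [mul_le_mul_of_nonneg_right hkey (sq_nonneg ‖z‖),
          mul_le_mul_of_nonneg_left hTt (show (0 : ℝ) ≤ 2 - q by linarith),
          mul_lt_mul_of_pos_left hz2 hq0]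
      linarith [hDlow, t1]
    have hW0 : W ≠ 0 := by
      intro h
      rw [h, mul_zero, zero_sub, norm_neg] at hstrict
      exact lt_irrefl _ hstrict
    refine ⟨fun _ => hW0, ?_⟩
    rw [if_neg hz0]
    have hsq : Complex.normSq T < Complex.normSq ((q : ℂ) * W - T) := by
      have h1 : Complex.normSq T = ‖T‖ ^ 2 := (Complex.sq_norm T).symm
      have h2 : Complex.normSq ((q : ℂ) * W - T) = ‖(q : ℂ) * W - T‖ ^ 2 :=
        (Complex.sq_norm _).symm
      rw [h1, h2]
      exact pow_lt_pow_left₀ hstrict (norm_nonneg _) two_ne_zero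
    have hexp : Complex.normSq ((q : ℂ) * W - T) =
        q ^ 2 * Complex.normSq W - 2 * q * (T.re * W.re + T.im * W.im) + Complex.normSq T := by
      simp only [Complex.normSq_apply, Complex.sub_re, Complex.sub_im, Complex.mul_re,
        Complex.mul_im, Complex.ofReal_re, Complex.ofReal_im]
      ring
    have hre : T.re * W.re + T.im * W.im < q / 2 * Complex.normSq W := by
      rw [hexp] at hsq
      have h6 : 2 * q * (T.re * W.re + T.im * W.im) <
          2 * q * (q / 2 * Complex.normSq W) := by
        rw [show 2 * q * (q / 2 * Complex.normSq W) = q ^ 2 * Complex.normSq W by ring]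
        linarith
      exact lt_of_mul_lt_mul_left h6 (by positivity)
    have hnsq : 0 < Complex.normSq W := Complex.normSq_pos.mpr hW0
    have hPW : (P / W).re = 1 - (T.re * W.re + T.im * W.im) / Complex.normSq W := by
      have hPT : P = W - T := by rw [hWPT]; ring
      rw [hPT, sub_div, div_self hW0, Complex.sub_re, Complex.one_re, Complex.div_re]
      ring
    rw [hPW]
    have hlt : (T.re * W.re + T.im * W.im) / Complex.normSq W < q / 2 :=
      (div_lt_iff₀ hnsq).mpr hre
    have hqr : (2 * mu - 1) / (2 * mu + 1) = 1 - q / 2 := by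
      rw [hq]; field_simp; ring
    linarith
end

section
/- Let λ, μ be real numbers with λ ≥ 1 and λ + μ > 1, and let n be a natural number. Then for every z in the open unit disc 𝕌 the partial sum (𝕎_{λ,μ})_n(z) is nonzero for z ≠ 0 and Re(𝕎_{λ,μ}(z)/(𝕎_{λ,μ})_n(z)) ≥ (2(λ+μ)−2)/(2(λ+μ)−1), where at z = 0 the ratio is understood as its analytic extension with value 1. -/
/-- The second normalized Wright function
`𝕎_{λ,μ}(z) = z + ∑_{m=1}^∞ (Γ(λ+μ)/((m+1)! Γ(λm+λ+μ))) z^{m+1}`. -/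
noncomputable def normWright2 (lam mu : ℝ) (z : ℂ) : ℂ :=
  ∑' m : ℕ,
    ((Real.Gamma (lam + mu) / (Nat.factorial (m + 1) * Real.Gamma (lam * m + lam + mu)) : ℝ) : ℂ)
      * z ^ (m + 1)

/-- The `n`-th partial sum
`(𝕎_{λ,μ})_n(z) = z + ∑_{m=1}^n (Γ(λ+μ)/((m+1)! Γ(λm+λ+μ))) z^{m+1}`. -/
noncomputable def normWright2Partial (lam mu : ℝ) (n : ℕ) (z : ℂ) : ℂ :=
  ∑ m ∈ Finset.range (n + 1),
    ((Real.Gamma (lam + mu) / (Nat.factorial (m + 1) * Real.Gamma (lam * m + lam + mu)) : ℝ) : ℂ)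
      * z ^ (m + 1)

/-!
Write `a_m` for the coefficients of `𝕎_{λ,μ}`, so `a_0 = 1`. The estimate
`Γ(λ+μ)/Γ(λm+λ+μ) ≤ 1/(λ+μ)_m` makes the `a_m` decay geometrically, fast enough that
`c ∑_{m≥1} a_m ≤ 1` with `c = 2(λ+μ) - 1 > 1`. For any series `f(z) = ∑ a_m z^{m+1}` with such
nonnegative coefficients, on the unit disc
`|f_n(z)| ≥ (1 - ∑_{m=1}^n a_m)|z| ≥ c (∑_{m>n} a_m)|z| ≥ c |f(z) - f_n(z)|`,
so `f/f_n` lies in the disc of radius `1/c` about `1` and `Re(f/f_n) ≥ 1 - 1/c`.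
-/

section PartialSums

variable {a : ℕ → ℝ} {z : ℂ}

theorem norm_ofReal_mul_pow_succ_le {b : ℝ} (hb : 0 ≤ b) (hz : ‖z‖ ≤ 1) (m : ℕ) :
    ‖(b : ℂ) * z ^ (m + 1)‖ ≤ b * ‖z‖ := by
  rw [norm_mul, norm_pow, Complex.norm_real, Real.norm_of_nonneg hb]
  exact mul_le_mul_of_nonneg_left (pow_le_of_le_one (norm_nonneg z) hz m.succ_ne_zero) hb

theorem summable_ofReal_mul_pow_succ (ha : ∀ m, 0 ≤ a m) (hsum : Summable a) (hz : ‖z‖ ≤ 1) :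
    Summable fun m ↦ (a m : ℂ) * z ^ (m + 1) :=
  .of_norm_bounded hsum fun m ↦
    (norm_ofReal_mul_pow_succ_le (ha m) hz m).trans (mul_le_of_le_one_right (ha m) hz)

theorem norm_tsum_sub_sum_range_le (ha : ∀ m, 0 ≤ a m) (hsum : Summable a) (hz : ‖z‖ ≤ 1)
    (n : ℕ) :
    ‖∑' m, (a m : ℂ) * z ^ (m + 1) - ∑ m ∈ Finset.range (n + 1), (a m : ℂ) * z ^ (m + 1)‖ ≤
      (∑' i, a (i + (n + 1))) * ‖z‖ := by
  rw [← (summable_ofReal_mul_pow_succ ha hsum hz).sum_add_tsum_nat_add (n + 1), add_sub_cancel_left]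
  exact tsum_of_norm_bounded
    (((summable_nat_add_iff (n + 1)).2 hsum).hasSum.mul_right ‖z‖)
    fun i ↦ norm_ofReal_mul_pow_succ_le (ha _) hz _

theorem one_sub_sum_mul_norm_le_norm_sum_range (ha : ∀ m, 0 ≤ a m) (ha0 : a 0 = 1)
    (hz : ‖z‖ ≤ 1) (n : ℕ) :
    (1 - ∑ m ∈ Finset.range n, a (m + 1)) * ‖z‖ ≤
      ‖∑ m ∈ Finset.range (n + 1), (a m : ℂ) * z ^ (m + 1)‖ := by
  have hhigher : ‖∑ m ∈ Finset.range n, (a (m + 1) : ℂ) * z ^ (m + 1 + 1)‖ ≤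
      (∑ m ∈ Finset.range n, a (m + 1)) * ‖z‖ := by
    rw [Finset.sum_mul]
    exact (norm_sum_le _ _).trans
      (Finset.sum_le_sum fun m _ ↦ norm_ofReal_mul_pow_succ_le (ha _) hz _)
  rw [Finset.sum_range_succ', ha0, Complex.ofReal_one, one_mul, zero_add, pow_one]
  have := norm_sub_norm_le z (-∑ m ∈ Finset.range n, (a (m + 1) : ℂ) * z ^ (m + 1 + 1))
  rw [norm_neg, sub_neg_eq_add, add_comm] at this
  linarith

theorem norm_tsum_div_sum_range_sub_one_le {c : ℝ} (ha : ∀ m, 0 ≤ a m) (ha0 : a 0 = 1)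
    (hsum : Summable a) (hc : 1 < c) (htail : c * ∑' m, a (m + 1) ≤ 1)
    (hz0 : z ≠ 0) (hz : ‖z‖ ≤ 1) (n : ℕ) :
    ∑ m ∈ Finset.range (n + 1), (a m : ℂ) * z ^ (m + 1) ≠ 0 ∧
      ‖(∑' m, (a m : ℂ) * z ^ (m + 1)) / ∑ m ∈ Finset.range (n + 1), (a m : ℂ) * z ^ (m + 1) - 1‖
        ≤ c⁻¹ := by
  set W := ∑' m, (a m : ℂ) * z ^ (m + 1)
  set P := ∑ m ∈ Finset.range (n + 1), (a m : ℂ) * z ^ (m + 1)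
  set S := ∑ m ∈ Finset.range n, a (m + 1)
  set τ := ∑' i, a (i + (n + 1))
  have hS : 0 ≤ S := Finset.sum_nonneg fun m _ ↦ ha _
  have hτ : 0 ≤ τ := tsum_nonneg fun i ↦ ha _
  have hsplit : S + τ = ∑' m, a (m + 1) := by
    simpa only [add_assoc] using ((summable_nat_add_iff 1).2 hsum).sum_add_tsum_nat_add n
  have hcτ : c * τ ≤ 1 - S := by nlinarith
  have hP : (1 - S) * ‖z‖ ≤ ‖P‖ := one_sub_sum_mul_norm_le_norm_sum_range ha ha0 hz n
  have hPpos : 0 < ‖P‖ := by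
    refine lt_of_lt_of_le (mul_pos ?_ (norm_pos_iff.2 hz0)) hP
    nlinarith [mul_le_mul_of_nonneg_left hS (by linarith : 0 ≤ c - 1)]
  have hP0 : P ≠ 0 := norm_pos_iff.1 hPpos
  refine ⟨hP0, ?_⟩
  have hWP : c * ‖W - P‖ ≤ ‖P‖ := calc
    c * ‖W - P‖ ≤ c * (τ * ‖z‖) :=
      mul_le_mul_of_nonneg_left (norm_tsum_sub_sum_range_le ha hsum hz n) (by linarith)
    _ ≤ (1 - S) * ‖z‖ := by rw [← mul_assoc]; exact mul_le_mul_of_nonneg_right hcτ (norm_nonneg z)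
    _ ≤ ‖P‖ := hP
  rw [div_sub_one hP0, norm_div, div_le_iff₀ hPpos, inv_mul_eq_div, le_div_iff₀ (by linarith)]
  linarith

end PartialSums

theorem Real.pow_mul_Gamma_le_Gamma_add_nat_s11 {x : ℝ} (hx : 0 < x) (k : ℕ) :
    x ^ k * Real.Gamma x ≤ Real.Gamma (x + k) := by
  induction k with
  | zero => simp
  | succ k ih =>
    have hxk : 0 < x + k := by positivity
    rw [Nat.cast_succ, ← add_assoc, Real.Gamma_add_one hxk.ne', pow_succ', mul_assoc]
    exact mul_le_mul (by linarith [k.cast_nonneg (α := ℝ)]) ih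
      (mul_nonneg (pow_nonneg hx.le k) (Real.Gamma_pos_of_pos hx).le) hxk.le

noncomputable def normWright2Coeff (lam mu : ℝ) (m : ℕ) : ℝ :=
  Real.Gamma (lam + mu) / (Nat.factorial (m + 1) * Real.Gamma (lam * m + lam + mu))

theorem normWright2_eq_tsum (lam mu : ℝ) (z : ℂ) :
    normWright2 lam mu z = ∑' m, (normWright2Coeff lam mu m : ℂ) * z ^ (m + 1) := rfl

theorem normWright2Partial_eq_sum (lam mu : ℝ) (n : ℕ) (z : ℂ) :
    normWright2Partial lam mu n z =
      ∑ m ∈ Finset.range (n + 1), (normWright2Coeff lam mu m : ℂ) * z ^ (m + 1) := rfl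

section Coefficients

variable {lam mu : ℝ}

theorem normWright2Coeff_nonneg (hlam : 0 ≤ lam) (hmu : 0 ≤ lam + mu) (m : ℕ) :
    0 ≤ normWright2Coeff lam mu m := by
  have harg : 0 ≤ lam * m + lam + mu := by nlinarith [m.cast_nonneg (α := ℝ)]
  exact div_nonneg (Real.Gamma_nonneg_of_nonneg hmu)
    (mul_nonneg (Nat.cast_nonneg _) (Real.Gamma_nonneg_of_nonneg harg))

theorem normWright2Coeff_zero (hmu : 0 < lam + mu) : normWright2Coeff lam mu 0 = 1 := by
  simp [normWright2Coeff, (Real.Gamma_pos_of_pos hmu).ne']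

/-- The estimate `Γ(λ+μ)/Γ(λm+λ+μ) ≤ 1/(λ+μ)_m`, combined with
`(λ+μ)_{k+1} ≥ (λ+μ)(λ+μ+1)^k` and `(k+2)! ≥ 2 * 3^k`. -/
theorem normWright2Coeff_succ_le (hlam : 1 ≤ lam) (hmu : 1 ≤ lam + mu) (k : ℕ) :
    normWright2Coeff lam mu (k + 1) ≤ (2 * (lam + mu))⁻¹ * (3 * (lam + mu + 1))⁻¹ ^ k := by
  set s := lam + mu
  have hs : 0 < s := by linarith
  have hfac : (2 * 3 ^ k : ℝ) ≤ (k + 2).factorial := by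
    rw [add_comm k]
    exact_mod_cast Nat.factorial_mul_pow_le_factorial (m := 2) (n := k)
  have hGamma : s * (s + 1) ^ k * Real.Gamma s ≤ Real.Gamma (lam * ↑(k + 1) + lam + mu) := calc
    s * (s + 1) ^ k * Real.Gamma s = (s + 1) ^ k * Real.Gamma (s + 1) := by
      rw [Real.Gamma_add_one hs.ne']; ring
    _ ≤ Real.Gamma (s + 1 + k) := Real.pow_mul_Gamma_le_Gamma_add_nat_s11 (by linarith) k
    _ ≤ Real.Gamma (lam * ↑(k + 1) + lam + mu) := by
      have hk : (0 : ℝ) ≤ k := k.cast_nonneg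
      refine Real.Gamma_strictMonoOn_Ici.monotoneOn (Set.mem_Ici.2 (by linarith))
        (Set.mem_Ici.2 (by push_cast; nlinarith)) (by push_cast; nlinarith)
  have hGpos : 0 < Real.Gamma (lam * ↑(k + 1) + lam + mu) :=
    (mul_pos (by positivity) (Real.Gamma_pos_of_pos hs)).trans_le hGamma
  unfold normWright2Coeff
  rw [inv_pow, ← mul_inv, div_le_iff₀ (by positivity), inv_mul_eq_div, le_div_iff₀ (by positivity)]
  calc Real.Gamma s * (2 * s * (3 * (s + 1)) ^ k)
      = (2 * 3 ^ k) * (s * (s + 1) ^ k * Real.Gamma s) := by rw [mul_pow]; ring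
    _ ≤ (k + 1 + 1).factorial * Real.Gamma (lam * ↑(k + 1) + lam + mu) :=
      mul_le_mul hfac hGamma (by positivity) (by positivity)

theorem summable_normWright2Coeff (hlam : 1 ≤ lam) (hmu : 1 ≤ lam + mu) :
    Summable (normWright2Coeff lam mu) := by
  have hr : (3 * (lam + mu + 1))⁻¹ < 1 := inv_lt_one_of_one_lt₀ (by linarith)
  refine (summable_nat_add_iff 1).1 <| .of_nonneg_of_le
    (fun k ↦ normWright2Coeff_nonneg (by linarith) (by linarith) _)
    (normWright2Coeff_succ_le hlam hmu)
    ((summable_geometric_of_lt_one (by positivity) hr).mul_left _)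

theorem mul_tsum_normWright2Coeff_succ_le_one (hlam : 1 ≤ lam) (hmu : 1 ≤ lam + mu) :
    (2 * (lam + mu) - 1) * ∑' k, normWright2Coeff lam mu (k + 1) ≤ 1 := by
  set s := lam + mu
  have hr : (3 * (s + 1))⁻¹ < 1 := inv_lt_one_of_one_lt₀ (by linarith)
  have hgeom := summable_geometric_of_lt_one (by positivity) hr
  have hT : ∑' k, normWright2Coeff lam mu (k + 1) ≤ (2 * s)⁻¹ * (1 - (3 * (s + 1))⁻¹)⁻¹ := by
    rw [← tsum_geometric_of_lt_one (by positivity) hr, ← tsum_mul_left]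
    exact Summable.tsum_le_tsum (normWright2Coeff_succ_le hlam hmu)
      ((summable_nat_add_iff 1).2 (summable_normWright2Coeff hlam hmu)) (hgeom.mul_left _)
  have hbound : (2 * s - 1) * ((2 * s)⁻¹ * (1 - (3 * (s + 1))⁻¹)⁻¹) ≤ 1 := by
    have hratio : 1 - (3 * (s + 1))⁻¹ = (3 * s + 2) / (3 * (s + 1)) := by field_simp; ring
    have hsimp : (2 * s - 1) * ((2 * s)⁻¹ * (1 - (3 * (s + 1))⁻¹)⁻¹) =
        (2 * s - 1) * (3 * (s + 1)) / (2 * s * (3 * s + 2)) := by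
      rw [hratio]
      field_simp
    rw [hsimp, div_le_one (by positivity)]
    nlinarith
  exact (mul_le_mul_of_nonneg_left hT (by linarith)).trans hbound

end Coefficients

/-- If `λ ≥ 1` and `λ + μ > 1`, then on the open unit disc `(𝕎_{λ,μ})_n` is nonzero away
from `0`, and `Re(𝕎_{λ,μ}(z)/(𝕎_{λ,μ})_n(z)) ≥ (2(λ+μ)-2)/(2(λ+μ)-1)`, the ratio being
understood as its analytic extension, with value `1`, at `z = 0`. -/
theorem re_normWright2_div_partial (lam mu : ℝ) (hlam : 1 ≤ lam) (hmu : 1 < lam + mu) (n : ℕ) :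
    ∀ z : ℂ, ‖z‖ < 1 →
      (z ≠ 0 → normWright2Partial lam mu n z ≠ 0) ∧
      (2 * (lam + mu) - 2) / (2 * (lam + mu) - 1) ≤
        (if z = 0 then (1 : ℂ)
          else normWright2 lam mu z / normWright2Partial lam mu n z).re := by
  intro z hz
  rw [normWright2_eq_tsum, normWright2Partial_eq_sum]
  have hc : 1 < 2 * (lam + mu) - 1 := by linarith
  have hγ : (2 * (lam + mu) - 2) / (2 * (lam + mu) - 1) = 1 - (2 * (lam + mu) - 1)⁻¹ := by
    field_simp
    ring
  split_ifs with hz0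
  · refine ⟨fun h ↦ (h hz0).elim, ?_⟩
    rw [hγ, Complex.one_re, sub_le_self_iff, inv_nonneg]
    linarith
  obtain ⟨hP0, hdisc⟩ := norm_tsum_div_sum_range_sub_one_le
    (normWright2Coeff_nonneg (by linarith) (by linarith)) (normWright2Coeff_zero (by linarith))
    (summable_normWright2Coeff hlam hmu.le) hc
    (mul_tsum_normWright2Coeff_succ_le_one hlam hmu.le) hz0 hz.le n
  refine ⟨fun _ ↦ hP0, ?_⟩
  have hre := neg_le_of_abs_le ((Complex.abs_re_le_norm _).trans hdisc)
  rw [Complex.sub_re, Complex.one_re] at hre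
  rw [hγ]
  linarith
end

section
/- For every z in the open unit disc 𝕌 = {z ∈ ℂ : |z| < 1}, the function sin(2√z) − 2√z·cos(2√z) has the property that 2z√z/(sin(2√z) − 2√z·cos(2√z)) has real part at least 1/2, where √z denotes the principal branch of the square root; equivalently, Re(z/𝒲_{1,5/2}(z)) ≥ 1/2 on 𝕌, where the ratio is extended analytically to z = 0 with value 1. -/
/-!
Put `t = 2√z`, so `‖t‖ < 2` and the quotient is `(t³/4) / (sin t - t cos t)`. For complex
`a, b` one has `Re (a / b) > 1/2` as soon as `‖b - a‖ < ‖a‖`, so it suffices to show that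
`sin t - t cos t` lies within `‖t‖³/4` of `t³/4`. Its Taylor series is
`∑ (-1)^(n+1) 2n t^(2n+1)/(2n+1)! = t³/3 - t⁵/30 + ⋯`; for `‖t‖ ≤ 2` the terms after `t³/3`
decay at least with ratio `1/7`, so the tail is at most `(7/45)‖t‖³`, and `7/45 + 1/12 < 1/4`.
-/

open Complex Nat

theorem two_mul_four_pow_div_factorial_le (n : ℕ) :
    2 * (n + 2) * 4 ^ (n + 1) / (2 * n + 5)! ≤ (1 / 7 : ℝ) ^ n * (2 / 15) := by
  set c : ℕ → ℝ := fun n => 2 * (n + 2) * 4 ^ (n + 1) / (2 * n + 5)!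
  have hc0 : c 0 = 2 / 15 := by norm_num [c, Nat.factorial]
  rw [← hc0]
  refine le_geom (u := c) (by norm_num) n fun k _ => ?_
  have hfac : ((2 * (k + 1) + 5)! : ℝ) = (2 * k + 7) * (2 * k + 6) * (2 * k + 5)! := by
    push_cast [show 2 * (k + 1) + 5 = (2 * k + 5) + 1 + 1 by ring, Nat.factorial_succ]; ring
  have hratio : c (k + 1) = 2 / ((k + 2) * (2 * k + 7)) * c k := by
    simp only [c, hfac]; push_cast; field_simp; ring
  rw [hratio]
  refine mul_le_mul_of_nonneg_right ?_ (by positivity)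
  rw [div_le_div_iff₀ (by positivity) (by norm_num)]
  nlinarith [k.cast_nonneg (α := ℝ)]

namespace Complex

theorem hasSum_sin_sub_mul_cos (t : ℂ) :
    HasSum (fun n : ℕ => (-1) ^ (n + 1) * (2 * n) * t ^ (2 * n + 1) / (2 * n + 1)!)
      (sin t - t * cos t) := by
  refine ((hasSum_sin t).sub ((hasSum_cos t).mul_left t)).congr_fun fun n => ?_
  have hfac : ((2 * n + 1)! : ℂ) = (2 * n + 1) * (2 * n)! := by
    push_cast [Nat.factorial_succ]; ring
  have hodd : (2 * n + 1 : ℂ) ≠ 0 := by exact_mod_cast (2 * n).succ_ne_zero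
  rw [hfac]
  field_simp
  ring

theorem norm_sin_sub_mul_cos_sub_cube_div_three_le {t : ℂ} (ht : ‖t‖ ≤ 2) :
    ‖sin t - t * cos t - t ^ 3 / 3‖ ≤ 7 / 45 * ‖t‖ ^ 3 := by
  set f : ℕ → ℂ := fun n => (-1) ^ (n + 1) * (2 * n) * t ^ (2 * n + 1) / (2 * n + 1)!
  have htail : HasSum (fun n => f (n + 2)) (sin t - t * cos t - t ^ 3 / 3) := by
    have hhead : ∑ n ∈ Finset.range 2, f n = t ^ 3 / 3 := by
      norm_num [Finset.sum_range_succ, f, Nat.factorial]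
      ring
    simpa [hhead] using (hasSum_nat_add_iff' (f := f) 2).mpr (hasSum_sin_sub_mul_cos t)
  have hterm (n : ℕ) : ‖f (n + 2)‖ ≤ ‖t‖ ^ 3 * ((1 / 7) ^ n * (2 / 15)) :=
    calc ‖f (n + 2)‖ = ‖t‖ ^ 3 * (2 * (n + 2) * (‖t‖ ^ 2) ^ (n + 1) / (2 * n + 5)!) := by
          simp only [f, norm_div, norm_mul, norm_pow, norm_neg, norm_one, one_pow, one_mul,
            norm_natCast, norm_ofNat]
          rw [show 2 * (n + 2) + 1 = 2 * n + 5 by ring]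
          push_cast
          ring
      _ ≤ ‖t‖ ^ 3 * (2 * (n + 2) * 4 ^ (n + 1) / (2 * n + 5)!) := by
          gcongr
          nlinarith [norm_nonneg t]
      _ ≤ ‖t‖ ^ 3 * ((1 / 7) ^ n * (2 / 15)) := by
          gcongr
          exact two_mul_four_pow_div_factorial_le n
  have hgeom : HasSum (fun n : ℕ => ‖t‖ ^ 3 * ((1 / 7) ^ n * (2 / 15))) (7 / 45 * ‖t‖ ^ 3) := by
    rw [show 7 / 45 * ‖t‖ ^ 3 = ‖t‖ ^ 3 * ((1 - 1 / 7)⁻¹ * (2 / 15)) by ring]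
    exact ((hasSum_geometric_of_lt_one (by norm_num) (by norm_num)).mul_right _).mul_left _
  exact htail.tsum_eq ▸ tsum_of_norm_bounded hgeom hterm

theorem half_lt_re_div_of_norm_sub_lt {a b : ℂ} (h : ‖b - a‖ < ‖a‖) :
    1 / 2 < (a / b).re := by
  have hb : b ≠ 0 := by rintro rfl; simp at h
  have hsq : normSq (b - a) < normSq a := by
    rw [normSq_eq_norm_sq, normSq_eq_norm_sq]; gcongr
  rw [div_re, ← add_div, lt_div_iff₀ (normSq_pos.mpr hb)]
  simp only [normSq_apply, sub_re, sub_im] at hsq ⊢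
  linarith

theorem norm_sin_sub_mul_cos_sub_cube_div_four_lt {t : ℂ} (ht0 : t ≠ 0) (ht : ‖t‖ ≤ 2) :
    ‖sin t - t * cos t - t ^ 3 / 4‖ < ‖t ^ 3 / 4‖ := by
  have hpos : 0 < ‖t‖ ^ 3 := by positivity
  calc ‖sin t - t * cos t - t ^ 3 / 4‖
        ≤ ‖sin t - t * cos t - t ^ 3 / 3‖ + ‖t ^ 3 / 12‖ := by
          rw [show sin t - t * cos t - t ^ 3 / 4 = (sin t - t * cos t - t ^ 3 / 3) + t ^ 3 / 12
            by ring]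
          exact norm_add_le _ _
    _ ≤ 7 / 45 * ‖t‖ ^ 3 + ‖t‖ ^ 3 / 12 := by
          gcongr
          · exact norm_sin_sub_mul_cos_sub_cube_div_three_le ht
          · simp
    _ < ‖t ^ 3 / 4‖ := by simp; linarith

end Complex

/-- For every `z` in the open unit disc,
`Re(2z√z/(sin(2√z) − 2√z·cos(2√z))) ≥ 1/2`, where `√z` is the principal branch of the
square root and the expression is understood, at `z = 0`, as its analytic extension with
value `1`. -/
theorem re_div_sin_sub_cos_ge (z : ℂ) (hz : ‖z‖ < 1) :
    (1 : ℝ) / 2 ≤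
      (if z = 0 then (1 : ℂ)
        else (2 * z * z ^ (1 / 2 : ℂ)) /
          (Complex.sin (2 * z ^ (1 / 2 : ℂ)) -
            2 * z ^ (1 / 2 : ℂ) * Complex.cos (2 * z ^ (1 / 2 : ℂ)))).re := by
  split_ifs with hz0
  · norm_num
  set w := z ^ (1 / 2 : ℂ)
  have hw : w ^ 2 = z := by
    have := cpow_nat_inv_pow z two_ne_zero
    norm_num at this
    exact this
  have hw0 : w ≠ 0 := by rintro h; simp [← hw, h] at hz0
  have hw1 : ‖w‖ ≤ 1 := by
    rw [← sq_le_one_iff₀ (norm_nonneg w), ← norm_pow, hw]; exact hz.le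
  have hnum : 2 * z * w = (2 * w) ^ 3 / 4 := by rw [← hw]; ring
  rw [hnum]
  refine (half_lt_re_div_of_norm_sub_lt ?_).le
  exact norm_sin_sub_mul_cos_sub_cube_div_four_lt (by simpa using hw0)
    (by rw [norm_mul, Complex.norm_two]; linarith)
end
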